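/- arXiv:1701.06862 — 5 statements merged into one kernel-verified Lean document; each statement's English description precedes it below -/
import Mathlib

section
/- For every α > 0, the integral ∫_{-1}^{1} G_α(x) dx is strictly greater than 1, where G_α(x) = (α/(1 - exp(-2α))) · exp(-α(x+1) - (x²-1)/2). -/
/-! Since `∫_{-1}^{1} exp (-α (x + 1)) dx = (1 - exp (-2α)) / α`, the normalised exponential
`x ↦ α / (1 - exp (-2α)) · exp (-α (x + 1))` has mass exactly `1` on `[-1, 1]`. The integrand of
the theorem is this density times `exp ((1 - x²) / 2)`, a factor that is `≥ 1` on `[-1, 1]` and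
`> 1` at `x = 0`; by continuity the mass strictly increases. -/

open Real intervalIntegral

theorem integral_exp_mul_add {c : ℝ} (hc : c ≠ 0) (d a b : ℝ) :
    ∫ x in a..b, exp (c * x + d) = (exp (c * b + d) - exp (c * a + d)) / c := by
  rw [integral_comp_mul_add exp hc, integral_exp, smul_eq_mul, inv_mul_eq_div]

theorem one_sub_exp_neg_two_mul_pos {α : ℝ} (hα : 0 < α) : 0 < 1 - exp (-2 * α) :=
  sub_pos.mpr (exp_lt_one_iff.mpr (by linarith))

theorem integral_normalized_exp_neg_mul_add_one {α : ℝ} (hα : 0 < α) :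
    ∫ x in (-1 : ℝ)..1, (α / (1 - exp (-2 * α))) * exp (-α * (x + 1)) = 1 := by
  have hneg : -α ≠ 0 := neg_ne_zero.mpr hα.ne'
  simp only [show ∀ x : ℝ, -α * (x + 1) = -α * x + -α from fun x => by ring]
  rw [integral_const_mul, integral_exp_mul_add hneg, show -α * 1 + -α = -2 * α by ring,
    show -α * -1 + -α = 0 by ring, exp_zero, div_mul_div_comm,
    div_eq_one_iff_eq (mul_ne_zero (one_sub_exp_neg_two_mul_pos hα).ne' hneg)]
  ring

theorem exp_neg_mul_add_one_le (α : ℝ) {x : ℝ} (hx : x ∈ Set.Icc (-1 : ℝ) 1) :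
    exp (-α * (x + 1)) ≤ exp (-α * (x + 1) - (x ^ 2 - 1) / 2) := by
  gcongr
  nlinarith [hx.1, hx.2]

/-- For every α > 0, ∫_{-1}^{1} G_α(x) dx > 1, where
G_α(x) = (α/(1 - exp(-2α))) · exp(-α(x+1) - (x²-1)/2). -/
theorem stmt_1 (α : ℝ) (hα : 0 < α) :
    1 < ∫ x in (-1 : ℝ)..1,
      (α / (1 - Real.exp (-2 * α))) * Real.exp (-α * (x + 1) - (x ^ 2 - 1) / 2) := by
  have hc : 0 < α / (1 - exp (-2 * α)) := div_pos hα (one_sub_exp_neg_two_mul_pos hα)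
  calc (1 : ℝ)
      = ∫ x in (-1 : ℝ)..1, (α / (1 - exp (-2 * α))) * exp (-α * (x + 1)) :=
        (integral_normalized_exp_neg_mul_add_one hα).symm
    _ < _ := by
      refine integral_lt_integral_of_continuousOn_of_le_of_exists_lt (by norm_num)
        (by fun_prop) (by fun_prop) (fun x hx => ?_) ⟨0, by norm_num, ?_⟩
      · exact mul_le_mul_of_nonneg_left
          (exp_neg_mul_add_one_le α (Set.Ioc_subset_Icc_self hx)) hc.le
      · gcongr
        norm_num
end

section
/- If M ≤ 1, then the only nonnegative stationary state of the equation ∂_t c = ∂_x(∂_x c + (x + c(-1) - c(1)) c) on (-1,1) with zero-flux boundary conditions and mass M is the Gaussian profile G_M(x) = M·exp(-x²/2)/∫_{-1}^1 exp(-y²/2) dy. Equivalently: any C¹ function c ≥ 0 on [-1,1] with ∫_{-1}^1 c = M ≤ 1 satisfying c'(x) + (x + α)c(x) = 0 for all x, where α = c(-1) - c(1), must have α = 0 and hence c = G_M. -/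
/-!
Multiplying the equation by the integrating factor `exp (α (x + 1) + (x² - 1) / 2)` shows that
`c = c(-1) exp (-α (x + 1) - (x² - 1) / 2)`, and the self-consistency `α = c(-1) - c(1)` then
forces `c(-1) = α / (1 - exp (-2α))` when `α ≠ 0`, i.e. `c = G_α`. Dropping the factor
`exp (-(x² - 1) / 2) ≥ 1` lowers the mass of `G_α` to exactly `1`, so a nonsymmetric state
has mass `> 1`. Hence `α = 0` and `c` is a multiple of `exp (-x² / 2)`, fixed by its mass.
-/

open Set Real intervalIntegral

theorem eqOn_Icc_of_hasDerivAt_zero {g : ℝ → ℝ} {a b : ℝ} (hg : ContinuousOn g (Icc a b))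
    (hg' : ∀ x ∈ Ioo a b, HasDerivAt g 0 x) : ∀ x ∈ Icc a b, g x = g a := by
  rintro x ⟨hax, hxb⟩
  rcases hax.eq_or_lt with rfl | hax
  · rfl
  obtain ⟨ξ, -, hξ⟩ := exists_hasDerivAt_eq_slope g (fun _ => 0) hax
    (hg.mono (Icc_subset_Icc le_rfl hxb)) fun y hy => hg' y ⟨hy.1, hy.2.trans_le hxb⟩
  rw [eq_comm, div_eq_zero_iff, sub_eq_zero] at hξ
  exact hξ.resolve_right (sub_ne_zero.2 hax.ne')

theorem eqOn_mul_exp_sub_of_hasDerivAt {c p P : ℝ → ℝ} {a b : ℝ}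
    (hc : ContinuousOn c (Icc a b)) (hP : ContinuousOn P (Icc a b))
    (hP' : ∀ x ∈ Ioo a b, HasDerivAt P (p x) x)
    (hc' : ∀ x ∈ Ioo a b, HasDerivAt c (-(p x * c x)) x) :
    ∀ x ∈ Icc a b, c x = c a * exp (P a - P x) := by
  have hconst := eqOn_Icc_of_hasDerivAt_zero (g := fun x => c x * exp (P x)) (hc.mul hP.rexp)
    fun x hx => ((hc' x hx).mul (hP' x hx).exp).congr_deriv (by ring)
  intro x hx
  rw [exp_sub, mul_div_assoc', ← hconst x hx, mul_div_cancel_right₀ _ (exp_ne_zero _)]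

theorem eqOn_integral_mul_div_integral {f g : ℝ → ℝ} {a b K : ℝ} (hab : a ≤ b)
    (hf : ∀ x ∈ Icc a b, f x = K * g x) (hg : ∫ x in a..b, g x ≠ 0) :
    ∀ x ∈ Icc a b, f x = (∫ x in a..b, f x) * g x / ∫ x in a..b, g x := by
  have hint : ∫ x in a..b, f x = K * ∫ x in a..b, g x := by
    rw [← integral_const_mul]
    exact integral_congr fun x hx => hf x (uIcc_of_le hab ▸ hx)
  intro x hx
  rw [hint, hf x hx]
  field_simp

/-- The paper's `G_α`; the prefactor makes `G_α (-1) - G_α 1 = α`. -/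
noncomputable def tiltedGaussian (α x : ℝ) : ℝ :=
  α / (1 - exp (-2 * α)) * exp (-α * (x + 1) - (x ^ 2 - 1) / 2)

theorem one_sub_exp_neg_two_mul_ne_zero {α : ℝ} (hα : α ≠ 0) : 1 - exp (-2 * α) ≠ 0 := by
  rw [sub_ne_zero, ne_comm, Ne, exp_eq_one_iff]
  exact mul_ne_zero (by norm_num) hα

theorem div_one_sub_exp_neg_two_mul_pos {α : ℝ} (hα : α ≠ 0) : 0 < α / (1 - exp (-2 * α)) := by
  rcases hα.lt_or_gt with hα | hα
  · exact div_pos_of_neg_of_neg hα (sub_neg.2 (one_lt_exp_iff.2 (by linarith)))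
  · exact div_pos hα (sub_pos.2 (exp_lt_one_iff.2 (by linarith)))

theorem integral_exp_neg_mul_add_one {α : ℝ} (hα : α ≠ 0) :
    ∫ x in (-1 : ℝ)..1, exp (-α * (x + 1)) = (1 - exp (-2 * α)) / α := by
  have h := integral_comp_mul_add (a := -1) (b := 1) exp (neg_ne_zero.2 hα) (-α)
  simp only [integral_exp, smul_eq_mul] at h
  rw [show (fun x => exp (-α * (x + 1))) = fun x => exp (-α * x + -α) by ext; ring_nf, h,
    show -α * -1 + -α = 0 by ring, show -α * 1 + -α = -2 * α by ring, exp_zero]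
  field_simp
  ring

theorem one_lt_integral_tiltedGaussian {α : ℝ} (hα : α ≠ 0) :
    1 < ∫ x in (-1 : ℝ)..1, tiltedGaussian α x := by
  have hlt : ∫ x in (-1 : ℝ)..1, exp (-α * (x + 1)) <
      ∫ x in (-1 : ℝ)..1, exp (-α * (x + 1) - (x ^ 2 - 1) / 2) := by
    refine integral_lt_integral_of_continuousOn_of_le_of_exists_lt (by norm_num)
      (by fun_prop) (by fun_prop) (fun x hx => exp_le_exp.2 ?_) ⟨0, by norm_num, exp_lt_exp.2 ?_⟩
    · nlinarith [hx.1, hx.2]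
    · norm_num
  calc 1 = α / (1 - exp (-2 * α)) * ∫ x in (-1 : ℝ)..1, exp (-α * (x + 1)) := by
        rw [integral_exp_neg_mul_add_one hα, div_mul_div_comm, mul_comm α,
          div_self (mul_ne_zero (one_sub_exp_neg_two_mul_ne_zero hα) hα)]
    _ < α / (1 - exp (-2 * α)) * ∫ x in (-1 : ℝ)..1, exp (-α * (x + 1) - (x ^ 2 - 1) / 2) :=
        mul_lt_mul_of_pos_left hlt (div_one_sub_exp_neg_two_mul_pos hα)
    _ = ∫ x in (-1 : ℝ)..1, tiltedGaussian α x := (integral_const_mul _ _).symm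

theorem eqOn_tiltedGaussian {c : ℝ → ℝ} (hc : ContinuousOn c (Icc (-1) 1))
    (hc' : ∀ x ∈ Ioo (-1 : ℝ) 1, HasDerivAt c (-((x + (c (-1) - c 1)) * c x)) x)
    (hα : c (-1) - c 1 ≠ 0) : ∀ x ∈ Icc (-1 : ℝ) 1, c x = tiltedGaussian (c (-1) - c 1) x := by
  set α := c (-1) - c 1 with hαc
  have hrep := eqOn_mul_exp_sub_of_hasDerivAt hc (P := fun x => α * (x + 1) + (x ^ 2 - 1) / 2)
    (by fun_prop) (fun x _ => ((((hasDerivAt_id x).add_const 1).const_mul α).add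
      (((hasDerivAt_pow 2 x).sub_const 1).div_const 2)).congr_deriv (by ring)) hc'
  have hc_one : c 1 = c (-1) * exp (-2 * α) := by
    rw [hrep 1 (by norm_num)]
    ring_nf
  have hcm1 : c (-1) = α / (1 - exp (-2 * α)) := by
    rw [eq_div_iff (one_sub_exp_neg_two_mul_ne_zero hα)]
    linear_combination -hαc + hc_one
  intro x hx
  rw [hrep x hx, tiltedGaussian, ← hcm1]
  ring_nf

theorem stmt_2_general (c : ℝ → ℝ) (M : ℝ)
    (hc1 : ContDiffOn ℝ 1 c (Set.Icc (-1) 1))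
    (hM : (∫ x in (-1 : ℝ)..1, c x) = M)
    (hM1 : M ≤ 1)
    (hstat : ∀ x ∈ Set.Icc (-1 : ℝ) 1,
      deriv c x + (x + (c (-1) - c 1)) * c x = 0) :
    c (-1) - c 1 = 0 ∧
      ∀ x ∈ Set.Icc (-1 : ℝ) 1,
        c x = M * Real.exp (-x ^ 2 / 2) / ∫ y in (-1 : ℝ)..1, Real.exp (-y ^ 2 / 2) := by
  have hc : ContinuousOn c (Icc (-1) 1) := hc1.continuousOn
  have hc' (x) (hx : x ∈ Ioo (-1 : ℝ) 1) : HasDerivAt c (-((x + (c (-1) - c 1)) * c x)) x := by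
    rw [← eq_neg_of_add_eq_zero_left (hstat x (Ioo_subset_Icc_self hx))]
    exact ((hc1.differentiableOn one_ne_zero).differentiableAt (Icc_mem_nhds hx.1 hx.2)).hasDerivAt
  have hα : c (-1) - c 1 = 0 := by
    by_contra hα
    rw [← hM, integral_congr fun x hx => eqOn_tiltedGaussian hc hc' hα x
      (uIcc_of_le (by norm_num : (-1 : ℝ) ≤ 1) ▸ hx)] at hM1
    exact hM1.not_gt (one_lt_integral_tiltedGaussian hα)
  rw [hα] at hc'
  have hrep := eqOn_mul_exp_sub_of_hasDerivAt hc (P := fun x => x ^ 2 / 2) (by fun_prop)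
    (fun x _ => ((hasDerivAt_pow 2 x).div_const 2).congr_deriv (by ring))
    fun x hx => (hc' x hx).congr_deriv (by ring)
  have hI : 0 < ∫ y in (-1 : ℝ)..1, exp (-y ^ 2 / 2) := intervalIntegral_pos_of_pos
    ((by fun_prop : Continuous _).intervalIntegrable _ _) (fun _ => exp_pos _) (by norm_num)
  refine ⟨hα, hM ▸ eqOn_integral_mul_div_integral (K := c (-1) * exp (1 / 2)) (by norm_num)
    (fun x hx => ?_) hI.ne'⟩
  rw [hrep x hx, mul_assoc, ← exp_add]
  ring_nf

/-- If M ≤ 1, any nonnegative C¹ stationary state of mass M is the Gaussian profile: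
α = c(-1) - c(1) must vanish and c = G_M. -/
theorem stmt_2 (c : ℝ → ℝ) (M : ℝ)
    (hc1 : ContDiffOn ℝ 1 c (Set.Icc (-1) 1))
    (hpos : ∀ x ∈ Set.Icc (-1 : ℝ) 1, 0 ≤ c x)
    (hM : (∫ x in (-1 : ℝ)..1, c x) = M)
    (hM1 : M ≤ 1)
    (hstat : ∀ x ∈ Set.Icc (-1 : ℝ) 1,
      deriv c x + (x + (c (-1) - c 1)) * c x = 0) :
    c (-1) - c 1 = 0 ∧
      ∀ x ∈ Set.Icc (-1 : ℝ) 1,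
        c x = M * Real.exp (-x ^ 2 / 2) / ∫ y in (-1 : ℝ)..1, Real.exp (-y ^ 2 / 2) :=
  stmt_2_general c M hc1 hM hM1 hstat
end

section
/- Let c be a strictly positive C¹ function on [-1,1] with mass M = ∫_{-1}^1 c(x) dx < 1, set α = c(-1)-c(1) and J = ∫_{-1}^1 x c(x) dx. Then ∫_{-1}^1 c (log c)'² dx + (M-2)α² + 2αJ + ∫_{-1}^1 x² c dx - 2M + 2(c(-1)+c(1)) + (1/(1-M))((1-M)α - J)² ≥ (M + 1/M - 2)α² - 2M. -/
/-- A priori lower bound on the entropy dissipation terms, case M < 1. -/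
theorem stmt_4 (c : ℝ → ℝ) (M α J : ℝ)
    (hc1 : ContDiffOn ℝ 1 c (Set.Icc (-1) 1))
    (hpos : ∀ x ∈ Set.Icc (-1 : ℝ) 1, 0 < c x)
    (hM : (∫ x in (-1 : ℝ)..1, c x) = M)
    (hM1 : M < 1)
    (hα : α = c (-1) - c 1)
    (hJ : J = ∫ x in (-1 : ℝ)..1, x * c x) :
    (M + 1 / M - 2) * α ^ 2 - 2 * M ≤
      (∫ x in (-1 : ℝ)..1, c x * (deriv c x / c x) ^ 2)
        + (M - 2) * α ^ 2 + 2 * α * J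
        + (∫ x in (-1 : ℝ)..1, x ^ 2 * c x) - 2 * M + 2 * (c (-1) + c 1)
        + (1 / (1 - M)) * ((1 - M) * α - J) ^ 2 := by
  have hab : (-1 : ℝ) ≤ 1 := by norm_num
  have huIcc : Set.uIcc (-1 : ℝ) 1 = Set.Icc (-1) 1 := Set.uIcc_of_le hab
  have hcont : ContinuousOn c (Set.Icc (-1) 1) := hc1.continuousOn
  have hcInt : IntervalIntegrable c MeasureTheory.volume (-1) 1 :=
    ContinuousOn.intervalIntegrable (by rw [huIcc]; exact hcont)
  have hM0 : 0 < M := by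
    rw [← hM]
    exact intervalIntegral.intervalIntegral_pos_of_pos_on hcInt
      (fun x hx => hpos x ⟨hx.1.le, hx.2.le⟩) (by norm_num)
  have h1M : (0 : ℝ) < 1 - M := by linarith
  -- the derivative within the interval
  set g : ℝ → ℝ := derivWithin c (Set.Icc (-1) 1) with hg
  have hunique : UniqueDiffOn ℝ (Set.Icc (-1 : ℝ) 1) := uniqueDiffOn_Icc (by norm_num)
  have hgcont : ContinuousOn g (Set.Icc (-1) 1) :=
    hc1.continuousOn_derivWithin hunique le_rfl
  have heq : ∀ x ∈ Set.Ioo (-1 : ℝ) 1, deriv c x = g x := by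
    intro x hx
    have hmem : Set.Icc (-1 : ℝ) 1 ∈ nhds x := Icc_mem_nhds hx.1 hx.2
    have hd : DifferentiableAt ℝ c x :=
      (hc1.differentiableOn one_ne_zero x ⟨hx.1.le, hx.2.le⟩).differentiableAt hmem
    exact (hd.derivWithin (hunique x ⟨hx.1.le, hx.2.le⟩)).symm
  have hne1 : ∀ᵐ x ∂(MeasureTheory.volume : MeasureTheory.Measure ℝ), x ≠ (1 : ℝ) := by
    refine MeasureTheory.ae_iff.mpr ?_
    have : {x : ℝ | ¬ x ≠ (1 : ℝ)} = {1} := by ext x; simp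
    rw [this]
    simp
  have haeImp : ∀ᵐ x ∂(MeasureTheory.volume : MeasureTheory.Measure ℝ),
      x ∈ Set.uIoc (-1 : ℝ) 1 → deriv c x = g x := by
    filter_upwards [hne1] with x hx1 hxm
    rw [Set.uIoc_of_le hab] at hxm
    exact heq x ⟨hxm.1, lt_of_le_of_ne hxm.2 hx1⟩
  have haeIoo : ∀ᵐ x ∂(MeasureTheory.volume.restrict (Set.uIoc (-1 : ℝ) 1)),
      deriv c x = g x :=
    (MeasureTheory.ae_restrict_iff' measurableSet_uIoc).2 haeImp
  have hgInt : IntervalIntegrable g MeasureTheory.volume (-1) 1 :=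
    ContinuousOn.intervalIntegrable (by rw [huIcc]; exact hgcont)
  have hdInt : IntervalIntegrable (deriv c) MeasureTheory.volume (-1) 1 := by
    rw [intervalIntegrable_iff] at hgInt ⊢
    exact hgInt.congr (haeIoo.mono fun x h => h.symm)
  -- FTC
  have hFTC : (∫ x in (-1 : ℝ)..1, g x) = c 1 - c (-1) := by
    apply intervalIntegral.integral_eq_sub_of_hasDeriv_right_of_le hab hcont _ hgInt
    intro x hx
    have hmem : Set.Icc (-1 : ℝ) 1 ∈ nhds x := Icc_mem_nhds hx.1 hx.2
    have hd : DifferentiableAt ℝ c x :=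
      (hc1.differentiableOn one_ne_zero x ⟨hx.1.le, hx.2.le⟩).differentiableAt hmem
    have h := hd.hasDerivAt
    rw [heq x hx] at h
    exact h.hasDerivWithinAt
  have hgsum : (∫ x in (-1 : ℝ)..1, g x) = -α := by rw [hFTC, hα]; ring
  -- integrand congruence
  have hIcongr : (∫ x in (-1 : ℝ)..1, c x * (deriv c x / c x) ^ 2)
      = ∫ x in (-1 : ℝ)..1, c x * (g x / c x) ^ 2 := by
    apply intervalIntegral.integral_congr_ae
    filter_upwards [haeImp] with x h hxm
    rw [h hxm]
  -- continuity and integrability of the main integrand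
  have hGcont : ContinuousOn (fun x => c x * (g x / c x) ^ 2) (Set.Icc (-1) 1) := by
    apply hcont.mul
    exact ((hgcont.div hcont (fun x hx => (hpos x hx).ne')).pow 2)
  have hGInt : IntervalIntegrable (fun x => c x * (g x / c x) ^ 2)
      MeasureTheory.volume (-1) 1 := ContinuousOn.intervalIntegrable (by rw [huIcc]; exact hGcont)
  -- lower-bound integrand: -(2*α/M) * g x - (α/M)^2 * c x
  have hLInt : IntervalIntegrable (fun x => -(2 * α / M) * g x - (α / M) ^ 2 * c x)
      MeasureTheory.volume (-1) 1 :=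
    ((hgInt.const_mul _).sub (hcInt.const_mul _))
  have hptwise : ∀ x ∈ Set.Icc (-1 : ℝ) 1,
      -(2 * α / M) * g x - (α / M) ^ 2 * c x ≤ c x * (g x / c x) ^ 2 := by
    intro x hx
    have hcx : 0 < c x := hpos x hx
    rw [← sub_nonneg]
    have hkey : c x * (g x / c x) ^ 2 - (-(2 * α / M) * g x - (α / M) ^ 2 * c x)
        = (M * g x + α * c x) ^ 2 / (M ^ 2 * c x) := by
      field_simp
      ring
    rw [hkey]
    positivity
  have hmono : (∫ x in (-1 : ℝ)..1, -(2 * α / M) * g x - (α / M) ^ 2 * c x)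
      ≤ ∫ x in (-1 : ℝ)..1, c x * (g x / c x) ^ 2 :=
    intervalIntegral.integral_mono_on hab hLInt hGInt hptwise
  have hLval : (∫ x in (-1 : ℝ)..1, -(2 * α / M) * g x - (α / M) ^ 2 * c x)
      = α ^ 2 / M := by
    rw [intervalIntegral.integral_sub (hgInt.const_mul _) (hcInt.const_mul _),
      intervalIntegral.integral_const_mul, intervalIntegral.integral_const_mul,
      hgsum, hM]
    field_simp
    ring
  have hA : α ^ 2 / M ≤ ∫ x in (-1 : ℝ)..1, c x * (deriv c x / c x) ^ 2 := by
    rw [hIcongr, ← hLval]; exact hmono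
  -- positivity of remaining terms
  have hX : 0 ≤ ∫ x in (-1 : ℝ)..1, x ^ 2 * c x :=
    intervalIntegral.integral_nonneg hab
      (fun u hu => mul_nonneg (sq_nonneg u) (hpos u hu).le)
  have hcm : 0 < c (-1) := hpos (-1) (by norm_num)
  have hcp : 0 < c 1 := hpos 1 (by norm_num)
  -- algebraic identity for the last term
  have hB : (1 / (1 - M)) * ((1 - M) * α - J) ^ 2
      = (1 - M) * α ^ 2 - 2 * α * J + J ^ 2 / (1 - M) := by
    field_simp
    ring
  have hJ2 : 0 ≤ J ^ 2 / (1 - M) := div_nonneg (sq_nonneg J) h1M.le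
  have hα2 : 0 ≤ (1 - M) * α ^ 2 := mul_nonneg h1M.le (sq_nonneg α)
  have hdiv : α ^ 2 / M = (1 / M) * α ^ 2 := by ring
  rw [hdiv] at hA
  nlinarith [hA, hX, hJ2, hα2, hcm.le, hcp.le]
end

section
/- Let M > 1, J̃₀ ∈ (0, (M-1)/2), and let J̃ : [0,T) → (0,∞) be continuous and satisfy J̃(t) ≤ J̃₀ + ((1-M)M²/2)·(1 - 2J̃₀/(M-1))·∫₀ᵗ J̃(s)⁻¹ ds for all t ∈ [0,T). Then T is finite; more precisely T ≤ J̃₀²/((M-1)M²(1 - 2J̃₀/(M-1))). -/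
/-!
Set `c = (M-1)M²(1 - 2J̃₀/(M-1))/2 > 0` and `K(t) = J̃₀ - c ∫₀ᵗ J̃⁻¹`, so that `J̃ ≤ K` and
`K' = -c/J̃`. Since `K ≥ J̃ > 0`, the function `K² + 2ct` has derivative `2c(1 - K/J̃) ≤ 0`, hence
`2ct ≤ K(t)² + 2ct ≤ K(0)² = J̃₀²` for every `t < T`.
-/

open Set MeasureTheory intervalIntegral

theorem hasDerivAt_integral_of_continuousOn_Icc {f : ℝ → ℝ} {a b s : ℝ}
    (hf : ContinuousOn f (Icc a b)) (hs : s ∈ Ioo a b) :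
    HasDerivAt (fun u => ∫ x in a..u, f x) (f s) s := by
  have hf' : ContinuousOn f (Ioo a b) := hf.mono Ioo_subset_Icc_self
  refine integral_hasDerivAt_right ?_ (hf'.stronglyMeasurableAtFilter isOpen_Ioo s hs)
    (hf'.continuousAt (isOpen_Ioo.mem_nhds hs))
  refine (hf.mono ?_).intervalIntegrable
  rw [uIcc_of_le hs.1.le]
  exact Icc_subset_Icc_right hs.2.le

theorem continuousOn_integral_of_continuousOn_Icc {f : ℝ → ℝ} {a b : ℝ} (hab : a ≤ b)
    (hf : ContinuousOn f (Icc a b)) :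
    ContinuousOn (fun u => ∫ x in a..u, f x) (Icc a b) := by
  have := continuousOn_primitive_interval (μ := volume)
    (hf.integrableOn_compact isCompact_Icc |>.mono_set (uIcc_of_le hab).subset)
  rwa [uIcc_of_le hab] at this

theorem antitoneOn_sq_add_of_hasDerivAt {J K : ℝ → ℝ} {a b c : ℝ} (hc : 0 ≤ c)
    (hK : ContinuousOn K (Icc a b))
    (hK' : ∀ s ∈ Ioo a b, HasDerivAt K (-(c * (J s)⁻¹)) s)
    (hJ : ∀ s ∈ Ioo a b, 0 < J s) (hJK : ∀ s ∈ Ioo a b, J s ≤ K s) :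
    AntitoneOn (fun s => K s ^ 2 + 2 * c * s) (Icc a b) := by
  have hderiv : ∀ s ∈ Ioo a b,
      HasDerivAt (fun s => K s ^ 2 + 2 * c * s) (2 * c * (1 - K s / J s)) s := by
    intro s hs
    refine (((hK' s hs).fun_pow 2).add ((hasDerivAt_id' s).const_mul (2 * c))).congr_deriv ?_
    field_simp [(hJ s hs).ne']
    ring
  refine antitoneOn_of_hasDerivWithinAt_nonpos (f' := fun s => 2 * c * (1 - K s / J s))
    (convex_Icc a b)
    ((hK.pow 2).add (continuousOn_const.mul continuousOn_id))
    (fun s hs => ?_) (fun s hs => ?_)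
  · rw [interior_Icc] at hs
    exact (hderiv s hs).hasDerivWithinAt
  · rw [interior_Icc] at hs
    have hratio : 1 ≤ K s / J s := (one_le_div (hJ s hs)).mpr (hJK s hs)
    nlinarith

theorem two_mul_mul_le_sq_of_le_sub_integral_inv {J : ℝ → ℝ} {a c t : ℝ} (hc : 0 ≤ c)
    (ht : 0 ≤ t) (hpos : ∀ s ∈ Icc 0 t, 0 < J s) (hcont : ContinuousOn J (Icc 0 t))
    (hle : ∀ s ∈ Icc 0 t, J s ≤ a - c * ∫ x in (0 : ℝ)..s, (J x)⁻¹) :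
    2 * c * t ≤ a ^ 2 := by
  set K : ℝ → ℝ := fun s => a - c * ∫ x in (0 : ℝ)..s, (J x)⁻¹
  have hinv : ContinuousOn (fun s => (J s)⁻¹) (Icc 0 t) :=
    hcont.inv₀ fun s hs => (hpos s hs).ne'
  have hK : ContinuousOn K (Icc 0 t) :=
    continuousOn_const.sub (continuousOn_const.mul
      (continuousOn_integral_of_continuousOn_Icc ht hinv))
  have hK' : ∀ s ∈ Ioo 0 t, HasDerivAt K (-(c * (J s)⁻¹)) s := fun s hs => by
    simpa using ((hasDerivAt_integral_of_continuousOn_Icc hinv hs).const_mul c).const_sub a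
  have hmono := antitoneOn_sq_add_of_hasDerivAt hc hK hK'
    (fun s hs => hpos s (Ioo_subset_Icc_self hs)) (fun s hs => hle s (Ioo_subset_Icc_self hs))
    ⟨le_rfl, ht⟩ ⟨ht, le_rfl⟩ ht
  simp only [K, integral_same, mul_zero, sub_zero, add_zero] at hmono
  nlinarith [sq_nonneg (a - c * ∫ x in (0 : ℝ)..t, (J x)⁻¹)]

theorem le_sq_div_of_le_sub_integral_inv {J : ℝ → ℝ} {a c T : ℝ} (hc : 0 < c)
    (hpos : ∀ t ∈ Ico 0 T, 0 < J t) (hcont : ContinuousOn J (Ico 0 T))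
    (hle : ∀ t ∈ Ico 0 T, J t ≤ a - c * ∫ s in (0 : ℝ)..t, (J s)⁻¹) :
    T ≤ a ^ 2 / (2 * c) := by
  refine le_of_forall_lt_imp_le_of_dense fun t htT => ?_
  rcases lt_or_ge t 0 with ht | ht
  · exact ht.le.trans (by positivity)
  have hsub : Icc 0 t ⊆ Ico 0 T := Icc_subset_Ico_right htT
  rw [le_div_iff₀ (by positivity), mul_comm]
  exact two_mul_mul_le_sq_of_le_sub_integral_inv hc.le ht (fun s hs => hpos s (hsub hs))
    (hcont.mono hsub) (fun s hs => hle s (hsub hs))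

theorem stmt_11_general (J : ℝ → ℝ) (M J₀ T : ℝ)
    (hM : 1 < M) (hJ₀' : J₀ < (M - 1) / 2)
    (hpos : ∀ t ∈ Set.Ico (0 : ℝ) T, 0 < J t)
    (hcont : ContinuousOn J (Set.Ico 0 T))
    (hineq : ∀ t ∈ Set.Ico (0 : ℝ) T,
      J t ≤ J₀ + ((1 - M) * M ^ 2 / 2) * (1 - 2 * J₀ / (M - 1)) *
        ∫ s in (0 : ℝ)..t, (J s)⁻¹) :
    T ≤ J₀ ^ 2 / ((M - 1) * M ^ 2 * (1 - 2 * J₀ / (M - 1))) := by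
  set c := (M - 1) * M ^ 2 / 2 * (1 - 2 * J₀ / (M - 1))
  have hc : 0 < c := by
    have hM1 : 0 < M - 1 := by linarith
    have : 2 * J₀ / (M - 1) < 1 := by rw [div_lt_one hM1]; linarith
    exact mul_pos (by positivity) (by linarith)
  have hbound := le_sq_div_of_le_sub_integral_inv (a := J₀) hc hpos hcont fun t ht => by
    convert hineq t ht using 1; ring
  convert hbound using 2; ring

/-- Finite-time blow-up ODE argument: if a positive continuous J̃ on [0,T) satisfies
the integral inequality, then T ≤ J̃₀² / ((M-1)M²(1 - 2J̃₀/(M-1))). -/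
theorem stmt_11 (J : ℝ → ℝ) (M J₀ T : ℝ)
    (hM : 1 < M) (hJ₀ : 0 < J₀) (hJ₀' : J₀ < (M - 1) / 2)
    (hpos : ∀ t ∈ Set.Ico (0 : ℝ) T, 0 < J t)
    (hcont : ContinuousOn J (Set.Ico 0 T))
    (hJ0 : J 0 = J₀)
    (hineq : ∀ t ∈ Set.Ico (0 : ℝ) T,
      J t ≤ J₀ + ((1 - M) * M ^ 2 / 2) * (1 - 2 * J₀ / (M - 1)) *
        ∫ s in (0 : ℝ)..t, (J s)⁻¹) :
    T ≤ J₀ ^ 2 / ((M - 1) * M ^ 2 * (1 - 2 * J₀ / (M - 1))) :=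
  stmt_11_general J M J₀ T hM hJ₀' hpos hcont hineq
end

section
/- Let c be as above (nonnegative, C¹, decreasing on [-1,1], c(-1) > c(1)) with mass M > 1, J̃ = ∫_{-1}^1 (x+1)c dx, satisfying the Jensen bound (M-2c(1))² ≤ (c(-1)-c(1))(2J̃ - 4c(1)) and J̃ ≤ J̃₀ < (M-1)/2, with 2J̃ ≥ 4c(1). Then c(-1) - c(1) ≥ M(M - 2J̃₀)/(2J̃₀) ≥ M/(M-1) > 1. -/
/-- Lower bound on the boundary jump: under the Jensen bound and smallness of the
shifted first moment, c(-1) - c(1) ≥ M(M - 2J̃₀)/(2J̃₀) ≥ M/(M-1) > 1. -/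
theorem stmt_13 (c : ℝ → ℝ) (M Jt J₀ : ℝ)
    (hnn : ∀ x ∈ Set.Icc (-1 : ℝ) 1, 0 ≤ c x)
    (hM : (∫ x in (-1 : ℝ)..1, c x) = M) (hM1 : 1 < M)
    (hJt : Jt = ∫ x in (-1 : ℝ)..1, (x + 1) * c x)
    (hjump : c 1 < c (-1))
    (hjensen : (M - 2 * c 1) ^ 2 ≤ (c (-1) - c 1) * (2 * Jt - 4 * c 1))
    (hJ0pos : 0 < J₀)
    (hJle : Jt ≤ J₀) (hJ0small : J₀ < (M - 1) / 2)
    (hc1Jt : 4 * c 1 ≤ 2 * Jt) :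
    M * (M - 2 * J₀) / (2 * J₀) ≤ c (-1) - c 1 ∧
      M / (M - 1) ≤ M * (M - 2 * J₀) / (2 * J₀) ∧
      1 < M / (M - 1) := by
  have ha : 0 ≤ c 1 := hnn 1 (by norm_num)
  have hD : 0 < c (-1) - c 1 := by linarith
  have hMt : 0 < M - 2 * c 1 := by linarith
  have hpos : 0 < 2 * Jt - 4 * c 1 := by
    rcases lt_or_eq_of_le hc1Jt with h | h
    · linarith
    · exfalso; nlinarith
  have hMJ0 : (0:ℝ) ≤ M - 2 * J₀ := by linarith
  have haux : M * (Jt - 2 * c 1) ≤ (M - 2 * c 1) * J₀ := by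
    nlinarith [mul_nonneg ha (show (0:ℝ) ≤ M - J₀ by linarith),
      mul_nonneg (show (0:ℝ) ≤ J₀ - Jt by linarith) (show (0:ℝ) ≤ M by linarith)]
  have key : M * (M - 2 * J₀) ≤ (c (-1) - c 1) * (2 * J₀) := by
    have h1 : M * (M - 2 * J₀) * (2 * Jt - 4 * c 1) ≤
        (M - 2 * c 1) ^ 2 * (2 * J₀) := by
      nlinarith [mul_le_mul_of_nonneg_left haux (show (0:ℝ) ≤ 2 * (M - 2 * J₀) by linarith),
        mul_le_mul_of_nonneg_right (show M - 2 * J₀ ≤ M - 2 * c 1 by linarith)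
          (show (0:ℝ) ≤ (M - 2 * c 1) * (2 * J₀) by positivity)]
    have h2 : (M - 2 * c 1) ^ 2 * (2 * J₀) ≤
        (c (-1) - c 1) * (2 * Jt - 4 * c 1) * (2 * J₀) := by nlinarith
    nlinarith
  refine ⟨?_, ?_, ?_⟩
  · rw [div_le_iff₀ (by linarith)]; linarith
  · rw [div_le_div_iff₀ (by linarith) (by linarith)]
    nlinarith [mul_pos (show (0:ℝ) < M by linarith) (show (0:ℝ) < M - 1 - 2 * J₀ by linarith)]
  · rw [lt_div_iff₀ (by linarith)]; linarith
end
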